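/- arXiv:0811.0427 — 5 statements merged into one kernel-verified Lean document; each statement's English description precedes it below -/
import Mathlib

section
/- For every integer l ≥ 1, the 2-SAT formula F over the variables y_1, ..., y_{2l} whose clauses are {y_i ∨ y_{i+1}, ¬y_i ∨ ¬y_{i+1} : 1 ≤ i ≤ 2l-1} together with the two clauses y_1 ∨ ¬y_{2l} and ¬y_1 ∨ y_{2l} is minimal unsatisfiable: F is unsatisfiable, and for every clause c of F the formula obtained from F by removing c is satisfiable. -/
/-- An assignment `a` satisfies a clause if the clause contains a literal `(v, b)` with `a v = b`. -/
def ClauseSat {V : Type} (a : V → Bool) (c : Finset (V × Bool)) : Prop :=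
  ∃ p ∈ c, a p.1 = p.2

/-- An assignment satisfies a CNF formula if it satisfies every clause. -/
def FormulaSat {V : Type} (a : V → Bool) (F : Finset (Finset (V × Bool))) : Prop :=
  ∀ c ∈ F, ClauseSat a c

/-- A CNF formula is satisfiable if some assignment satisfies it. -/
def Satisfiable {V : Type} (F : Finset (Finset (V × Bool))) : Prop :=
  ∃ a : V → Bool, FormulaSat a F

/-- A CNF formula is minimal unsatisfiable if it is unsatisfiable but removing
any single clause yields a satisfiable formula. -/
def MinimalUnsat {V : Type} [DecidableEq V] (F : Finset (Finset (V × Bool))) : Prop :=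
  ¬ Satisfiable F ∧ ∀ c ∈ F, Satisfiable (F.erase c)

/-- A `k`-SAT formula: every clause has exactly `k` literals whose underlying
variables are pairwise distinct. -/
def IsKSat {V : Type} [DecidableEq V] (k : ℕ) (F : Finset (Finset (V × Bool))) : Prop :=
  ∀ c ∈ F, c.card = k ∧ (c.image Prod.fst).card = k

/-- The 2-SAT formula over variables `y_0, …, y_{2l-1}` with clauses
`y_i ∨ y_{i+1}` and `¬y_i ∨ ¬y_{i+1}` for `0 ≤ i ≤ 2l-2`, together with
`y_0 ∨ ¬y_{2l-1}` and `¬y_0 ∨ y_{2l-1}`. -/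
def cycleFormula (l : ℕ) : Finset (Finset (ℕ × Bool)) :=
  ((Finset.range (2 * l - 1)).image fun i =>
      ({(i, true), (i + 1, true)} : Finset (ℕ × Bool))) ∪
  ((Finset.range (2 * l - 1)).image fun i =>
      ({(i, false), (i + 1, false)} : Finset (ℕ × Bool))) ∪
  ({{(0, true), (2 * l - 1, false)}, {(0, false), (2 * l - 1, true)}} :
      Finset (Finset (ℕ × Bool)))

/-! The two clauses on `y_i, y_{i+1}` together say `y_{i+1} = ¬y_i`, so along the path
`y_0, …, y_{2l-1}` of odd length a model would have `y_{2l-1} = ¬y_0`, whereas the two end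
clauses say `y_0 = y_{2l-1}`. Dropping one clause on `y_j, y_{j+1}` lets the alternation repeat
once there, which makes the ends agree; dropping an end clause, a purely alternating assignment
with the right value at `y_0` satisfies the rest. -/

section Clauses

variable {V : Type} [DecidableEq V] {a : V → Bool} {u v : V}

theorem clauseSat_pair_iff {b₁ b₂ : Bool} :
    ClauseSat a {(u, b₁), (v, b₂)} ↔ a u = b₁ ∨ a v = b₂ := by
  simp [ClauseSat]

theorem clauseSat_pair_of_ne (h : a u ≠ a v) (b : Bool) : ClauseSat a {(u, b), (v, b)} := by
  rw [clauseSat_pair_iff]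
  cases hu : a u <;> cases hv : a v <;> cases b <;> simp_all

theorem clauseSat_pair_of_eq (h : a u = a v) (b : Bool) : ClauseSat a {(u, b), (v, !b)} := by
  rw [clauseSat_pair_iff, ← h]
  cases a u <;> cases b <;> simp

theorem ne_of_clauseSat_pair (h₁ : ClauseSat a {(u, true), (v, true)})
    (h₂ : ClauseSat a {(u, false), (v, false)}) : a u ≠ a v := by
  rw [clauseSat_pair_iff] at h₁ h₂
  cases hu : a u <;> cases hv : a v <;> simp_all

theorem eq_of_clauseSat_pair (h₁ : ClauseSat a {(u, true), (v, false)})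
    (h₂ : ClauseSat a {(u, false), (v, true)}) : a u = a v := by
  rw [clauseSat_pair_iff] at h₁ h₂
  cases hu : a u <;> cases hv : a v <;> simp_all

theorem satisfiable_erase_of_clauseSat {F : Finset (Finset (V × Bool))} {c : Finset (V × Bool)}
    (h : ∀ c' ∈ F, c' ≠ c → ClauseSat a c') : Satisfiable (F.erase c) :=
  ⟨a, fun c' hc' => h c' (Finset.mem_of_mem_erase hc') (Finset.ne_of_mem_erase hc')⟩

end Clauses

theorem Nat.bodd_eq_true_of_odd {n : ℕ} (hn : Odd n) : n.bodd = true := by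
  obtain ⟨k, rfl⟩ := hn
  simp [Nat.bodd_add, Nat.bodd_mul, Nat.bodd_two]

theorem Bool.eq_xor_bodd_of_succ_eq_not {f : ℕ → Bool} {n : ℕ}
    (h : ∀ i < n, f (i + 1) = !f i) : f n = (f 0 ^^ n.bodd) := by
  induction n with
  | zero => simp
  | succ n ih =>
    rw [h n n.lt_succ_self, ih fun i hi => h i (by omega), Nat.bodd_succ]
    cases f 0 <;> simp

/-- The assignment that alternates along `0, 1, 2, …` except for one repetition `b, b`
at positions `j, j + 1`. -/
def kinkAt (j : ℕ) (b : Bool) (i : ℕ) : Bool :=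
  b ^^ (i + j).bodd ^^ decide (j < i)

theorem kinkAt_succ_of_ne {j i : ℕ} (b : Bool) (h : i ≠ j) :
    kinkAt j b (i + 1) = !kinkAt j b i := by
  have : j < i + 1 ↔ j < i := by omega
  simp [kinkAt, this, Nat.add_right_comm i 1 j, Nat.bodd_succ]

theorem kinkAt_self (j : ℕ) (b : Bool) : kinkAt j b j = b := by
  simp [kinkAt, Nat.bodd_add]

theorem kinkAt_zero_eq_of_odd {j n : ℕ} (b : Bool) (hj : j < n) (hn : Odd n) :
    kinkAt j b 0 = kinkAt j b n := by
  simp [kinkAt, hj, Nat.bodd_add, Nat.bodd_eq_true_of_odd hn]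

theorem mem_cycleFormula {l : ℕ} {c : Finset (ℕ × Bool)} :
    c ∈ cycleFormula l ↔
      (∃ i < 2 * l - 1, ∃ b, c = {(i, b), (i + 1, b)}) ∨ ∃ b, c = {(0, b), (2 * l - 1, !b)} := by
  simp only [cycleFormula, Finset.mem_union, Finset.mem_image, Finset.mem_range,
      Finset.mem_insert, Finset.mem_singleton]
  constructor
  · rintro ((⟨i, hi, rfl⟩ | ⟨i, hi, rfl⟩) | rfl | rfl)
    exacts [.inl ⟨i, hi, true, rfl⟩, .inl ⟨i, hi, false, rfl⟩, .inr ⟨true, rfl⟩, .inr ⟨false, rfl⟩]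
  · rintro (⟨i, hi, ⟨⟩ | ⟨⟩, rfl⟩ | ⟨⟨⟩ | ⟨⟩, rfl⟩)
    exacts [.inl (.inr ⟨i, hi, rfl⟩), .inl (.inl ⟨i, hi, rfl⟩), .inr (.inr rfl), .inr (.inl rfl)]

section CycleFormula

variable {l : ℕ}

theorem odd_two_mul_sub_one (hl : 1 ≤ l) : Odd (2 * l - 1) :=
  ⟨l - 1, by omega⟩

theorem not_satisfiable_cycleFormula (hl : 1 ≤ l) : ¬ Satisfiable (cycleFormula l) := by
  rintro ⟨a, ha⟩
  have hpath : ∀ i < 2 * l - 1, a (i + 1) = !a i := fun i hi =>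
    (Bool.eq_not_of_ne (ne_of_clauseSat_pair
      (ha _ (mem_cycleFormula.2 (.inl ⟨i, hi, true, rfl⟩)))
      (ha _ (mem_cycleFormula.2 (.inl ⟨i, hi, false, rfl⟩)))).symm)
  have hlast : a (2 * l - 1) = !a 0 := by
    rw [Bool.eq_xor_bodd_of_succ_eq_not hpath, Nat.bodd_eq_true_of_odd (odd_two_mul_sub_one hl),
      Bool.xor_true]
  have hends : a 0 = a (2 * l - 1) := eq_of_clauseSat_pair
    (ha _ (mem_cycleFormula.2 (.inr ⟨true, rfl⟩))) (ha _ (mem_cycleFormula.2 (.inr ⟨false, rfl⟩)))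
  exact Bool.eq_not_self (a 0) |>.mp (hends.trans hlast)

theorem satisfiable_cycleFormula_erase_path {j : ℕ} (hj : j < 2 * l - 1) (b : Bool) :
    Satisfiable ((cycleFormula l).erase {(j, b), (j + 1, b)}) := by
  refine satisfiable_erase_of_clauseSat (a := kinkAt j (!b)) fun c hc hne => ?_
  rcases mem_cycleFormula.1 hc with ⟨i, hi, b', rfl⟩ | ⟨b', rfl⟩
  · by_cases hij : i = j
    · subst hij
      have : b' = !b := by cases b <;> cases b' <;> simp_all
      exact clauseSat_pair_iff.2 (.inl (by rw [kinkAt_self, this]))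
    · exact clauseSat_pair_of_ne (by simp [kinkAt_succ_of_ne _ hij]) b'
  · exact clauseSat_pair_of_eq (kinkAt_zero_eq_of_odd _ hj (odd_two_mul_sub_one (by omega))) b'

theorem satisfiable_cycleFormula_erase_end (b : Bool) :
    Satisfiable ((cycleFormula l).erase {(0, b), (2 * l - 1, !b)}) := by
  refine satisfiable_erase_of_clauseSat (a := fun i => !b ^^ i.bodd) fun c hc hne => ?_
  rcases mem_cycleFormula.1 hc with ⟨i, hi, b', rfl⟩ | ⟨b', rfl⟩
  · exact clauseSat_pair_of_ne (by simp [Nat.bodd_succ]) b'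
  · have : b' = !b := by cases b <;> cases b' <;> simp_all
    exact clauseSat_pair_iff.2 (.inl (by simp [this]))

end CycleFormula

theorem cycleFormula_minimalUnsat (l : ℕ) (hl : 1 ≤ l) :
    MinimalUnsat (cycleFormula l) := by
  refine ⟨not_satisfiable_cycleFormula hl, fun c hc => ?_⟩
  rcases mem_cycleFormula.1 hc with ⟨j, hj, b, rfl⟩ | ⟨b, rfl⟩
  · exact satisfiable_cycleFormula_erase_path hj b
  · exact satisfiable_cycleFormula_erase_end b
end

section
/- Every minimal unsatisfiable 2-SAT formula over n Boolean variables has at most 4n clauses. -/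
/-!
In the implication graph of a 2-CNF formula, where the clause `x ∨ y` gives the edges `¬x → y`
and `¬y → x`, the formula is unsatisfiable exactly when some literal `ℓ` reaches `¬ℓ` and `¬ℓ`
reaches `ℓ`. A path that revisits no literal uses fewer than `2n` clauses, so the clauses on two
such paths form an unsatisfiable subformula with fewer than `4n` clauses; by minimality it is the
whole formula.
-/

open Relation Finset

theorem reflTransGen_exists_mem_mono {ι α : Type*} (R : ι → α → α → Prop) {S E : Finset ι}
    (hSE : S ⊆ E) ⦃x y : α⦄ :
    ReflTransGen (fun a b => ∃ i ∈ S, R i a b) x y →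
      ReflTransGen (fun a b => ∃ i ∈ E, R i a b) x y :=
  ReflTransGen.mono (fun _ _ ⟨i, hi, hab⟩ => ⟨i, hSE hi, hab⟩) _ _

theorem exists_subset_reflTransGen_card_lt {ι α : Type*} [Fintype α] (R : ι → α → α → Prop)
    {E : Finset ι} {x y : α} (h : ReflTransGen (fun a b => ∃ i ∈ E, R i a b) x y) :
    ∃ S ⊆ E, ReflTransGen (fun a b => ∃ i ∈ S, R i a b) x y ∧ S.card < Fintype.card α := by
  classical
  -- Induct on the path from its end, keeping `#S` below the number of vertices from which `y` is
  -- reachable inside `S`: a new label is only added at a vertex this count did not include.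
  let reaches (S : Finset ι) : Finset α := {z | ReflTransGen (fun a b => ∃ i ∈ S, R i a b) z y}
  suffices ∃ S ⊆ E, ReflTransGen (fun a b => ∃ i ∈ S, R i a b) x y ∧ #S < #(reaches S) by
    obtain ⟨S, hSE, hS, hcard⟩ := this
    exact ⟨S, hSE, hS, hcard.trans_le (card_le_univ _)⟩
  induction h using ReflTransGen.head_induction_on with
  | refl => exact ⟨∅, empty_subset _, .refl, card_pos.2 ⟨y, mem_filter.2 ⟨mem_univ y, .refl⟩⟩⟩
  | @head x z hxz _ ih =>
    obtain ⟨S, hSE, hzy, hcard⟩ := ih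
    by_cases hxy : ReflTransGen (fun a b => ∃ i ∈ S, R i a b) x y
    · exact ⟨S, hSE, hxy, hcard⟩
    obtain ⟨i, hiE, hi⟩ := hxz
    have hmono := reflTransGen_exists_mem_mono R (subset_insert i S)
    have hxy' : ReflTransGen (fun a b => ∃ j ∈ insert i S, R j a b) x y :=
      .head ⟨i, mem_insert_self i S, hi⟩ (hmono hzy)
    refine ⟨insert i S, insert_subset hiE hSE, hxy', ?_⟩
    have hsub : insert x (reaches S) ⊆ reaches (insert i S) :=
      insert_subset (mem_filter.2 ⟨mem_univ x, hxy'⟩) fun w hw =>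
        mem_filter.2 ⟨mem_univ w, hmono (mem_filter.1 hw).2⟩
    calc #(insert i S) ≤ #S + 1 := card_insert_le i S
      _ < #(insert x (reaches S)) := by
        rw [card_insert_of_notMem (s := reaches S) fun hx => hxy (mem_filter.1 hx).2]; omega
      _ ≤ #(reaches (insert i S)) := card_le_card hsub

theorem Satisfiable.mono {V : Type} {S F : Finset (Finset (V × Bool))} (hSF : S ⊆ F)
    (hF : Satisfiable F) : Satisfiable S :=
  let ⟨a, ha⟩ := hF
  ⟨a, fun c hc => ha c (hSF hc)⟩

theorem MinimalUnsat.subset_of_not_satisfiable {V : Type} [DecidableEq V]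
    {F S : Finset (Finset (V × Bool))} (hF : MinimalUnsat F) (hSF : S ⊆ F)
    (hS : ¬ Satisfiable S) : F ⊆ S := by
  intro c hcF
  by_contra hcS
  exact hS ((hF.2 c hcF).mono fun d hd => mem_erase.2 ⟨by rintro rfl; exact hcS hd, hSF hd⟩)

namespace TwoSat

variable {V : Type}

def negLit (p : V × Bool) : V × Bool := (p.1, !p.2)

@[simp] theorem negLit_negLit (p : V × Bool) : negLit (negLit p) = p := by simp [negLit]

theorem holds_negLit_iff {a : V → Bool} {p : V × Bool} :
    a (negLit p).1 = (negLit p).2 ↔ a p.1 ≠ p.2 := by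
  obtain ⟨v, (_ | _)⟩ := p <;> simp [negLit]

/-- For a two-literal clause `c`, this edge `x → y` of the implication graph says `c = ¬x ∨ y`. -/
def ImplEdge (c : Finset (V × Bool)) (x y : V × Bool) : Prop :=
  negLit x ∈ c ∧ y ∈ c ∧ negLit x ≠ y

def Implies (F : Finset (Finset (V × Bool))) : V × Bool → V × Bool → Prop :=
  ReflTransGen fun x y => ∃ c ∈ F, ImplEdge c x y

variable {F S : Finset (Finset (V × Bool))} {c : Finset (V × Bool)} {x y ℓ : V × Bool}
  {a : V → Bool}

theorem ImplEdge.contrapose (h : ImplEdge c x y) : ImplEdge c (negLit y) (negLit x) :=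
  ⟨by simpa using h.2.1, h.1, by simpa [eq_comm] using h.2.2⟩

theorem ImplEdge.holds (hc : c.card = 2) (ha : ClauseSat a c) (h : ImplEdge c x y)
    (hx : a x.1 = x.2) : a y.1 = y.2 := by
  classical
  have hc : c = {negLit x, y} :=
    (eq_of_subset_of_card_le (insert_subset h.1 (singleton_subset_iff.2 h.2.1))
      (by rw [hc, card_pair h.2.2])).symm
  obtain ⟨p, hp, hap⟩ := ha
  rw [hc, mem_insert, mem_singleton] at hp
  rcases hp with rfl | rfl
  · exact absurd hx (holds_negLit_iff.1 hap)
  · exact hap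

theorem Implies.mono (hSF : S ⊆ F) (h : Implies S x y) : Implies F x y :=
  reflTransGen_exists_mem_mono ImplEdge hSF h

theorem Implies.contrapose (h : Implies F x y) : Implies F (negLit y) (negLit x) := by
  induction h with
  | refl => exact .refl
  | tail _ hyz ih =>
    obtain ⟨c, hc, e⟩ := hyz
    exact .head ⟨c, hc, e.contrapose⟩ ih

theorem Implies.holds (hF : ∀ c ∈ F, c.card = 2) (ha : FormulaSat a F) (h : Implies F x y)
    (hx : a x.1 = x.2) : a y.1 = y.2 := by
  induction h with
  | refl => exact hx
  | tail _ hyz ih =>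
    obtain ⟨c, hc, e⟩ := hyz
    exact e.holds (hF c hc) (ha c hc) ih

structure IsClosedConsistent (F : Finset (Finset (V × Bool))) (M : Set (V × Bool)) : Prop where
  closed : ∀ ⦃x y⦄, x ∈ M → Implies F x y → y ∈ M
  consistent : ∀ ⦃x⦄, x ∈ M → negLit x ∉ M

theorem isClosedConsistent_empty : IsClosedConsistent F ∅ :=
  ⟨fun _ _ hx => hx.elim, fun _ hx => hx.elim⟩

theorem IsClosedConsistent.union_implies {M : Set (V × Bool)} (hM : IsClosedConsistent F M)
    (hℓM : negLit ℓ ∉ M) (hℓ : ¬ Implies F ℓ (negLit ℓ)) :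
    IsClosedConsistent F (M ∪ {y | Implies F ℓ y}) := by
  constructor
  · rintro x y (hx | hx) hxy
    · exact .inl (hM.closed hx hxy)
    · exact .inr (ReflTransGen.trans hx hxy)
  · rintro x (hx | hx) (hnx | hnx)
    · exact hM.consistent hx hnx
    · exact hℓM (hM.closed hx (negLit_negLit x ▸ Implies.contrapose hnx))
    · exact hℓM (hM.closed hnx (Implies.contrapose hx))
    · exact hℓ (ReflTransGen.trans hx (negLit_negLit x ▸ Implies.contrapose hnx))

theorem IsClosedConsistent.mem_of_maximal {M : Set (V × Bool)}
    (hM : Maximal (IsClosedConsistent F) M) (hℓM : negLit ℓ ∉ M)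
    (hℓ : ¬ Implies F ℓ (negLit ℓ)) : ℓ ∈ M :=
  hM.2 (hM.1.union_implies hℓM hℓ) Set.subset_union_left (.inr ReflTransGen.refl)

theorem IsClosedConsistent.satisfiable {M : Set (V × Bool)} (hF : ∀ c ∈ F, c.card = 2)
    (hM : IsClosedConsistent F M) (hcomplete : ∀ p, p ∈ M ∨ negLit p ∈ M) : Satisfiable F := by
  classical
  have hholds : ∀ p ∈ M, decide ((p.1, true) ∈ M) = p.2 := by
    rintro ⟨v, (_ | _)⟩ hp
    · simpa using fun ht => hM.consistent hp (by simpa [negLit] using ht)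
    · simpa using hp
  refine ⟨fun v => decide ((v, true) ∈ M), fun c hc => ?_⟩
  obtain ⟨p, q, hpq, rfl⟩ := card_eq_two.1 (hF c hc)
  rcases hcomplete p with hp | hnp
  · exact ⟨p, mem_insert_self p {q}, hholds p hp⟩
  · have hq : q ∈ M := hM.closed hnp (.single ⟨{p, q}, hc, by simp, by simp, by simpa using hpq⟩)
    exact ⟨q, mem_insert_of_mem (mem_singleton_self q), hholds q hq⟩

theorem not_satisfiable_iff_exists_implies_negLit [Finite V] (hF : ∀ c ∈ F, c.card = 2) :
    ¬ Satisfiable F ↔ ∃ ℓ, Implies F ℓ (negLit ℓ) ∧ Implies F (negLit ℓ) ℓ := by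
  constructor
  · intro hunsat
    by_contra! hcyc
    -- A maximal closed consistent set of literals decides every variable.
    obtain ⟨M, -, hM⟩ := Finite.exists_le_maximal (isClosedConsistent_empty (F := F))
    refine hunsat (hM.1.satisfiable hF fun p => ?_)
    by_contra! hp
    by_cases hpp : Implies F p (negLit p)
    · exact hp.2 (IsClosedConsistent.mem_of_maximal hM (by simpa using hp.1)
        (by simpa using hcyc p hpp))
    · exact hp.1 (IsClosedConsistent.mem_of_maximal hM hp.2 hpp)
  · rintro ⟨ℓ, hpos, hneg⟩ ⟨a, ha⟩
    by_cases hℓ : a ℓ.1 = ℓ.2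
    · exact holds_negLit_iff.1 (hpos.holds hF ha hℓ) hℓ
    · exact hℓ (hneg.holds hF ha (holds_negLit_iff.2 hℓ))

end TwoSat

open TwoSat

theorem minimalUnsat_twoSat_card_le {V : Type} [DecidableEq V] [Fintype V] (n : ℕ)
    (hV : Fintype.card V = n) (F : Finset (Finset (V × Bool)))
    (h2 : IsKSat 2 F) (hmin : MinimalUnsat F) :
    F.card ≤ 4 * n := by
  have hF : ∀ c ∈ F, c.card = 2 := fun c hc => (h2 c hc).1
  obtain ⟨ℓ, hpos, hneg⟩ := (not_satisfiable_iff_exists_implies_negLit hF).1 hmin.1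
  obtain ⟨S₁, hS₁F, hS₁, hS₁card⟩ := exists_subset_reflTransGen_card_lt ImplEdge hpos
  obtain ⟨S₂, hS₂F, hS₂, hS₂card⟩ := exists_subset_reflTransGen_card_lt ImplEdge hneg
  have hSF : S₁ ∪ S₂ ⊆ F := union_subset hS₁F hS₂F
  have hS : ¬ Satisfiable (S₁ ∪ S₂) :=
    (not_satisfiable_iff_exists_implies_negLit fun c hc => hF c (hSF hc)).2
      ⟨ℓ, Implies.mono subset_union_left hS₁, Implies.mono subset_union_right hS₂⟩
  rw [Fintype.card_prod, Fintype.card_bool, hV] at hS₁card hS₂card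
  calc F.card ≤ (S₁ ∪ S₂).card := card_le_card (hmin.subset_of_not_satisfiable hSF hS)
    _ ≤ S₁.card + S₂.card := card_union_le S₁ S₂
    _ ≤ 4 * n := by omega
end

section
/- Let F_X = (V_X, C_X) and F_Y = (V_Y, C_Y) be CNF formulas over disjoint sets of variables, let c_0 = z_1 ∨ z_2 ∨ ... ∨ z_k be a clause of C_X consisting of k distinct literals with k ≤ |C_Y|, and let h : C_Y → {z_1, ..., z_k} be any surjective map. Define the formula F_Z over the variables V_X ∪ V_Y with clause set C_Z = (C_X \ {c_0}) ∪ { c_y ∨ h(c_y) : c_y ∈ C_Y }. If F_X and F_Y are both minimal unsatisfiable, then F_Z is minimal unsatisfiable. -/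
/-- Lift a clause along a renaming of variables. -/
def liftClause {A B : Type} [DecidableEq A] [DecidableEq B] (f : A → B)
    (c : Finset (A × Bool)) : Finset (B × Bool) :=
  c.image fun p => (f p.1, p.2)

/-- The clause set `C_Z = (C_X \ {c_0}) ∪ { c_y ∨ h(c_y) : c_y ∈ C_Y }`, with the
variables of `F_X` and `F_Y` made disjoint via the sum type `VX ⊕ VY`. -/
def combinedFormula {VX VY : Type} [DecidableEq VX] [DecidableEq VY]
    (CX : Finset (Finset (VX × Bool))) (CY : Finset (Finset (VY × Bool)))
    (c₀ : Finset (VX × Bool)) (h : Finset (VY × Bool) → VX × Bool) :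
    Finset (Finset ((VX ⊕ VY) × Bool)) :=
  ((CX.erase c₀).image (liftClause Sum.inl)) ∪
    (CY.image fun c => insert (Sum.inl (h c).1, (h c).2) (liftClause Sum.inr c))

/-!
An assignment satisfying `F_Z` falsifies some `c_y ∈ C_Y` on the `V_Y` side, so it satisfies the
attached literal `h(c_y) ∈ c₀`; its `V_X` part then satisfies all of `C_X`, which is impossible.

Deleting a clause `c_x ≠ c₀`: a model of `C_X \ {c_x}` satisfies `c₀` through some literal `z`,
and by surjectivity `z = h(c_y)`; pairing it with a model of `C_Y \ {c_y}` satisfies the rest of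
`F_Z`, because the one `C_Y`-clause left open carries `z`. Deleting `c_y ∨ h(c_y)`: pair a model of
`C_X \ {c₀}` with a model of `C_Y \ {c_y}`.
-/

lemma clauseSat_liftClause {A B : Type} [DecidableEq A] [DecidableEq B] (f : A → B)
    (a : B → Bool) (c : Finset (A × Bool)) :
    ClauseSat a (liftClause f c) ↔ ClauseSat (a ∘ f) c := by
  simp only [ClauseSat, liftClause, Finset.exists_mem_image, Function.comp_apply]

lemma clauseSat_insert {V : Type} [DecidableEq V] (a : V → Bool) (p : V × Bool)
    (c : Finset (V × Bool)) : ClauseSat a (insert p c) ↔ a p.1 = p.2 ∨ ClauseSat a c :=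
  Finset.exists_mem_insert p c _

lemma formulaSat_erase_iff {V : Type} [DecidableEq V] (a : V → Bool)
    (F : Finset (Finset (V × Bool))) (d : Finset (V × Bool)) :
    FormulaSat a (F.erase d) ↔ ∀ c ∈ F, c ≠ d → ClauseSat a c :=
  ⟨fun H c hc hcd => H c (Finset.mem_erase.mpr ⟨hcd, hc⟩),
    fun H c hc => H c (Finset.mem_of_mem_erase hc) (Finset.ne_of_mem_erase hc)⟩

lemma formulaSat_of_formulaSat_erase {V : Type} [DecidableEq V] {a : V → Bool}
    {F : Finset (Finset (V × Bool))} {c : Finset (V × Bool)} (hF : FormulaSat a (F.erase c))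
    (hc : ClauseSat a c) : FormulaSat a F := fun d hd =>
  if hdc : d = c then hdc ▸ hc else hF d (Finset.mem_erase.mpr ⟨hdc, hd⟩)

section Combined

variable {VX VY : Type} [DecidableEq VX] [DecidableEq VY]
  (CX : Finset (Finset (VX × Bool))) (CY : Finset (Finset (VY × Bool)))
  (c₀ : Finset (VX × Bool)) (h : Finset (VY × Bool) → VX × Bool)

lemma formulaSat_combinedFormula_iff (a : VX ⊕ VY → Bool) :
    FormulaSat a (combinedFormula CX CY c₀ h) ↔
      FormulaSat (a ∘ Sum.inl) (CX.erase c₀) ∧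
        ∀ cy ∈ CY, a (Sum.inl (h cy).1) = (h cy).2 ∨ ClauseSat (a ∘ Sum.inr) cy := by
  simp only [FormulaSat, combinedFormula, Finset.forall_mem_union, Finset.forall_mem_image,
    clauseSat_insert, clauseSat_liftClause]

lemma formulaSat_combinedFormula_erase_iff (a : VX ⊕ VY → Bool)
    (d : Finset ((VX ⊕ VY) × Bool)) :
    FormulaSat a ((combinedFormula CX CY c₀ h).erase d) ↔
      (∀ cx ∈ CX.erase c₀, liftClause Sum.inl cx ≠ d → ClauseSat (a ∘ Sum.inl) cx) ∧
        ∀ cy ∈ CY, insert (Sum.inl (h cy).1, (h cy).2) (liftClause Sum.inr cy) ≠ d →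
          a (Sum.inl (h cy).1) = (h cy).2 ∨ ClauseSat (a ∘ Sum.inr) cy := by
  simp only [formulaSat_erase_iff, combinedFormula, Finset.forall_mem_union,
    Finset.forall_mem_image, clauseSat_insert, clauseSat_liftClause]

variable {CX CY c₀ h}

lemma not_satisfiable_combinedFormula (hmem : ∀ c ∈ CY, h c ∈ c₀)
    (hXu : ¬ Satisfiable CX) (hYu : ¬ Satisfiable CY) :
    ¬ Satisfiable (combinedFormula CX CY c₀ h) := by
  rintro ⟨a, ha⟩
  obtain ⟨haX, haY⟩ := (formulaSat_combinedFormula_iff CX CY c₀ h a).mp ha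
  obtain ⟨cy, hcy, hcy_unsat⟩ : ∃ cy ∈ CY, ¬ ClauseSat (a ∘ Sum.inr) cy := by
    by_contra! hall
    exact hYu ⟨a ∘ Sum.inr, hall⟩
  have hc₀ : ClauseSat (a ∘ Sum.inl) c₀ :=
    ⟨h cy, hmem cy hcy, (haY cy hcy).resolve_right hcy_unsat⟩
  exact hXu ⟨a ∘ Sum.inl, formulaSat_of_formulaSat_erase haX hc₀⟩

lemma satisfiable_combinedFormula_erase_liftClause (hc₀ : c₀ ∈ CX)
    (hsurj : ∀ z ∈ c₀, ∃ c ∈ CY, h c = z)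
    (hXm : ∀ c ∈ CX, Satisfiable (CX.erase c)) (hYm : ∀ c ∈ CY, Satisfiable (CY.erase c))
    {cx : Finset (VX × Bool)} (hcx : cx ∈ CX.erase c₀) :
    Satisfiable ((combinedFormula CX CY c₀ h).erase (liftClause Sum.inl cx)) := by
  obtain ⟨aX, haX⟩ := hXm cx (Finset.mem_of_mem_erase hcx)
  obtain ⟨z, hz, haz⟩ := haX c₀ (Finset.mem_erase.mpr ⟨(Finset.ne_of_mem_erase hcx).symm, hc₀⟩)
  obtain ⟨cz, hcz, rfl⟩ := hsurj z hz
  obtain ⟨aY, haY⟩ := hYm cz hcz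
  refine ⟨Sum.elim aX aY, (formulaSat_combinedFormula_erase_iff CX CY c₀ h _ _).mpr ⟨?_, ?_⟩⟩
  · intro cx' hcx' hne
    exact (formulaSat_erase_iff _ _ _).mp haX cx' (Finset.mem_of_mem_erase hcx')
      fun e => hne (e ▸ rfl)
  · intro cy hcy _
    by_cases hcyz : cy = cz
    · exact Or.inl (hcyz ▸ haz)
    · exact Or.inr ((formulaSat_erase_iff _ _ _).mp haY cy hcy hcyz)

lemma satisfiable_combinedFormula_erase_insert (hc₀ : c₀ ∈ CX)
    (hXm : ∀ c ∈ CX, Satisfiable (CX.erase c)) (hYm : ∀ c ∈ CY, Satisfiable (CY.erase c))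
    {cy : Finset (VY × Bool)} (hcy : cy ∈ CY) :
    Satisfiable ((combinedFormula CX CY c₀ h).erase
      (insert (Sum.inl (h cy).1, (h cy).2) (liftClause Sum.inr cy))) := by
  obtain ⟨aX, haX⟩ := hXm c₀ hc₀
  obtain ⟨aY, haY⟩ := hYm cy hcy
  refine ⟨Sum.elim aX aY, (formulaSat_combinedFormula_erase_iff CX CY c₀ h _ _).mpr
    ⟨fun cx hcx _ => haX cx hcx, fun cy' hcy' hne => Or.inr ?_⟩⟩
  exact (formulaSat_erase_iff _ _ _).mp haY cy' hcy' fun e => hne (e ▸ rfl)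

end Combined

theorem combined_minimalUnsat_general {VX VY : Type} [DecidableEq VX] [DecidableEq VY]
    (CX : Finset (Finset (VX × Bool))) (CY : Finset (Finset (VY × Bool)))
    (c₀ : Finset (VX × Bool)) (hc₀ : c₀ ∈ CX)
    (h : Finset (VY × Bool) → VX × Bool)
    (hmem : ∀ c ∈ CY, h c ∈ c₀)
    (hsurj : ∀ z ∈ c₀, ∃ c ∈ CY, h c = z)
    (hX : MinimalUnsat CX) (hY : MinimalUnsat CY) :
    MinimalUnsat (combinedFormula CX CY c₀ h) := by
  refine ⟨not_satisfiable_combinedFormula hmem hX.1 hY.1, fun c hc => ?_⟩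
  rcases Finset.mem_union.mp hc with hc | hc
  · obtain ⟨cx, hcx, rfl⟩ := Finset.mem_image.mp hc
    exact satisfiable_combinedFormula_erase_liftClause hc₀ hsurj hX.2 hY.2 hcx
  · obtain ⟨cy, hcy, rfl⟩ := Finset.mem_image.mp hc
    exact satisfiable_combinedFormula_erase_insert hc₀ hX.2 hY.2 hcy

theorem combined_minimalUnsat {VX VY : Type} [DecidableEq VX] [DecidableEq VY]
    (CX : Finset (Finset (VX × Bool))) (CY : Finset (Finset (VY × Bool)))
    (c₀ : Finset (VX × Bool)) (hc₀ : c₀ ∈ CX) (k : ℕ) (hk : c₀.card = k)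
    (hkY : k ≤ CY.card)
    (h : Finset (VY × Bool) → VX × Bool)
    (hmem : ∀ c ∈ CY, h c ∈ c₀)
    (hsurj : ∀ z ∈ c₀, ∃ c ∈ CY, h c = z)
    (hX : MinimalUnsat CX) (hY : MinimalUnsat CY) :
    MinimalUnsat (combinedFormula CX CY c₀ h) :=
  combined_minimalUnsat_general CX CY c₀ hc₀ h hmem hsurj hX hY
end

section
/- For all integers k ≥ 2 and m ≥ 1, the CNF formula F_0^(k) over the variables x_1, ..., x_{mk} whose clauses are all k-clauses x_{i_1} ∨ x_{i_2} ∨ ... ∨ x_{i_k} with (t-1)m + 1 ≤ i_t ≤ tm for each 1 ≤ t ≤ k, together with the k clauses ¬x_{(s-1)m+1} ∨ ¬x_{(s-1)m+2} ∨ ... ∨ ¬x_{sm} for 1 ≤ s ≤ k, is minimal unsatisfiable: F_0^(k) is unsatisfiable, and for every clause c of F_0^(k) the formula obtained by removing c is satisfiable. -/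
/-- The formula `F₀^(k)` over variables `x_0, …, x_{mk-1}`: all positive k-clauses
`x_{i₁} ∨ … ∨ x_{i_k}` with `tm ≤ i_{t+1} < (t+1)m` for each `0 ≤ t < k`,
together with the `k` negative clauses `¬x_{sm} ∨ … ∨ ¬x_{(s+1)m - 1}` for `0 ≤ s < k`. -/
def F₀k (k m : ℕ) : Finset (Finset (ℕ × Bool)) :=
  ((Finset.univ : Finset (Fin k → Fin m)).image fun f =>
    (Finset.univ : Finset (Fin k)).image fun (t : Fin k) => (((t : ℕ) * m + (f t : ℕ), true))) ∪
  ((Finset.range k).image fun s =>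
    (Finset.range m).image fun i => (s * m + i, false))

/-!
Arrange the variables in `k` blocks `x t 0, …, x t (m-1)`. Any assignment falsifies some
variable in each block (by the negative block clauses), and the positive clause through these
variables is then falsified. Without the positive clause through `x t (f t)`, make exactly those
variables false: every other positive clause differs from it in some block, where it picks a
variable that stays true, and each block clause contains one of the false variables. Without the clause of block `s`, make exactly block `s` true.
-/

open Finset

section TransversalFormula

variable {V α β : Type} [DecidableEq V]

def transversalClause [Fintype α] (x : α → β → V) (f : α → β) : Finset (V × Bool) :=
  univ.image fun t => (x t (f t), true)

def blockClause [Fintype β] (x : α → β → V) (s : α) : Finset (V × Bool) :=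
  univ.image fun i => (x s i, false)

@[simp]
lemma clauseSat_transversalClause_iff [Fintype α] {x : α → β → V} {f : α → β} {a : V → Bool} :
    ClauseSat a (transversalClause x f) ↔ ∃ t, a (x t (f t)) = true := by
  simp [ClauseSat, transversalClause]

@[simp]
lemma clauseSat_blockClause_iff [Fintype β] {x : α → β → V} {s : α} {a : V → Bool} :
    ClauseSat a (blockClause x s) ↔ ∃ i, a (x s i) = false := by
  simp [ClauseSat, blockClause]

variable [Fintype α] [Fintype β] [DecidableEq α]

def transversalFormula (x : α → β → V) : Finset (Finset (V × Bool)) :=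
  univ.image (transversalClause x) ∪ univ.image (blockClause x)

lemma not_satisfiable_transversalFormula (x : α → β → V) :
    ¬ Satisfiable (transversalFormula x) := by
  rintro ⟨a, ha⟩
  have hblock : ∀ s, ∃ i, a (x s i) = false := fun s =>
    clauseSat_blockClause_iff.mp <| ha _ <| mem_union_right _ <| mem_image_of_mem _ (mem_univ s)
  choose f hf using hblock
  obtain ⟨t, ht⟩ := clauseSat_transversalClause_iff.mp <|
    ha _ <| mem_union_left _ <| mem_image_of_mem _ (mem_univ f)
  simp [hf t] at ht

lemma formulaSat_erase_transversalFormula {x : α → β → V} {a : V → Bool}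
    {c : Finset (V × Bool)}
    (htrans : ∀ f, transversalClause x f ≠ c → ClauseSat a (transversalClause x f))
    (hblock : ∀ s, blockClause x s ≠ c → ClauseSat a (blockClause x s)) :
    FormulaSat a ((transversalFormula x).erase c) := by
  intro c' hc'
  obtain ⟨hne, hc'⟩ := mem_erase.mp hc'
  rcases mem_union.mp hc' with hc' | hc'
  · obtain ⟨f, -, rfl⟩ := mem_image.mp hc'
    exact htrans f hne
  · obtain ⟨s, -, rfl⟩ := mem_image.mp hc'
    exact hblock s hne

variable {x : α → β → V} (hx : Function.Injective2 x)
include hx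

lemma satisfiable_erase_transversalClause (f : α → β) :
    Satisfiable ((transversalFormula x).erase (transversalClause x f)) := by
  refine ⟨fun v => decide (∀ t, x t (f t) ≠ v), formulaSat_erase_transversalFormula ?_ ?_⟩
  · intro g hgf
    obtain ⟨t, ht⟩ := Function.ne_iff.mp fun hgf' => hgf (congrArg _ hgf')
    refine clauseSat_transversalClause_iff.mpr ⟨t, decide_eq_true fun t' h => ht ?_⟩
    obtain ⟨rfl, hft⟩ := hx h
    exact hft.symm
  · intro s _
    exact clauseSat_blockClause_iff.mpr ⟨f s, decide_eq_false fun h => h s rfl⟩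

lemma satisfiable_erase_blockClause [Nonempty β] (s₀ : α) :
    Satisfiable ((transversalFormula x).erase (blockClause x s₀)) := by
  refine ⟨fun v => decide (∃ i, x s₀ i = v), formulaSat_erase_transversalFormula ?_ ?_⟩
  · intro g _
    exact clauseSat_transversalClause_iff.mpr ⟨s₀, decide_eq_true ⟨g s₀, rfl⟩⟩
  · intro s hs
    refine clauseSat_blockClause_iff.mpr ⟨Classical.arbitrary β, decide_eq_false ?_⟩
    rintro ⟨i, h⟩
    exact hs (congrArg (blockClause x) (hx h).1.symm)

theorem minimalUnsat_transversalFormula [Nonempty β] : MinimalUnsat (transversalFormula x) := by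
  refine ⟨not_satisfiable_transversalFormula x, fun c hc => ?_⟩
  rcases mem_union.mp hc with hc | hc
  · obtain ⟨f, -, rfl⟩ := mem_image.mp hc
    exact satisfiable_erase_transversalClause hx f
  · obtain ⟨s, -, rfl⟩ := mem_image.mp hc
    exact satisfiable_erase_blockClause hx s

end TransversalFormula

lemma injective2_mul_add (k m : ℕ) :
    Function.Injective2 fun (t : Fin k) (i : Fin m) => (t : ℕ) * m + i := by
  intro t t' i i' h
  have := finProdFinEquiv.injective (a₁ := (t, i)) (a₂ := (t', i')) <| Fin.ext <| by
    simp only [finProdFinEquiv_apply_val]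
    linarith
  exact Prod.mk.inj this

lemma F₀k_eq_transversalFormula (k m : ℕ) :
    F₀k k m = transversalFormula fun (t : Fin k) (i : Fin m) => (t : ℕ) * m + i := by
  simp only [F₀k, transversalFormula, ← image_fin_univ, image_image]
  rfl

theorem F₀k_minimalUnsat_general (k m : ℕ) (hm : 1 ≤ m) :
    MinimalUnsat (F₀k k m) := by
  have : Nonempty (Fin m) := ⟨⟨0, hm⟩⟩
  rw [F₀k_eq_transversalFormula]
  exact minimalUnsat_transversalFormula (injective2_mul_add k m)

theorem F₀k_minimalUnsat (k m : ℕ) (hk : 2 ≤ k) (hm : 1 ≤ m) :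
    MinimalUnsat (F₀k k m) :=
  F₀k_minimalUnsat_general k m hm
end

section
/- For every integer m ≥ 1 there exists a minimal unsatisfiable 3-SAT formula over a set of 9m Boolean variables that has at least 8m^3 clauses. -/
/-!
Suppose the clauses `g i` over the variables `V` form a minimal unsatisfiable formula, witnessed
by assignments `w i` that falsify `g i` and no other clause. Take three blocks `l`, each with a
selector variable `x l i` for every clause and a private copy of `V`. The clauses
`¬x 0 (f 0) ∨ ¬x 1 (f 1) ∨ ¬x 2 (f 2)` for all `f` force some block to select nothing, while
the clauses `x l i ∨ g i`, read on the copy of block `l`, force every block to select something.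
The result is again minimal unsatisfiable, with `|ι|^3 + 3|ι|` clauses, and it is 3-SAT when
every `g i` has two literals. Starting from the minimal unsatisfiable 2-CNF
`z 0 ↔ z 1 ↔ ⋯ ↔ z (m-1)`, `z 0 ≠ z (m-1)`, with `2m` clauses on `m` variables, this gives `9m`
variables and `(2m)^3 + 6m` clauses. For `m = 1` the eight full clauses on three variables
suffice.
-/

open Finset Function

section Families

variable {ι V : Type}

structure IsMUFamily (g : ι → Finset (V × Bool)) (w : ι → V → Bool) : Prop where
  exists_not_clauseSat : ∀ a : V → Bool, ∃ i, ¬ ClauseSat a (g i)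
  clauseSat_iff : ∀ i j, ClauseSat (w i) (g j) ↔ j ≠ i

variable {g : ι → Finset (V × Bool)} {w : ι → V → Bool}

theorem IsMUFamily.injective (h : IsMUFamily g w) : Injective g := by
  intro i j hij
  by_contra hne
  have hsat := (h.clauseSat_iff i j).2 (Ne.symm hne)
  rw [← hij] at hsat
  exact (h.clauseSat_iff i i).1 hsat rfl

theorem IsMUFamily.minimalUnsat [Fintype ι] [DecidableEq V] (h : IsMUFamily g w) :
    MinimalUnsat (univ.image g) := by
  constructor
  · rintro ⟨a, ha⟩
    obtain ⟨i, hi⟩ := h.exists_not_clauseSat a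
    exact hi (ha _ (mem_image_of_mem g (mem_univ i)))
  · simp only [forall_mem_image, mem_univ, forall_const]
    intro i
    refine ⟨w i, fun d hd => ?_⟩
    obtain ⟨j, -, rfl⟩ := mem_image.1 (mem_of_mem_erase hd)
    exact (h.clauseSat_iff i j).2 fun hji => ne_of_mem_erase hd (hji ▸ rfl)

theorem isKSat_image_univ_iff [Fintype ι] [DecidableEq V] {k : ℕ} :
    IsKSat k (univ.image g) ↔ ∀ i, (g i).card = k ∧ ((g i).image Prod.fst).card = k := by
  simp [IsKSat]

end Families

section Rename

variable {ι V W : Type} {g : ι → Finset (V × Bool)} {w : ι → V → Bool}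

theorem clauseSat_map_prodMap (e : V ↪ W) (a : W → Bool) (c : Finset (V × Bool)) :
    ClauseSat a (c.map (e.prodMap (.refl Bool))) ↔ ClauseSat (a ∘ e) c := by
  simp only [ClauseSat, mem_map, exists_exists_and_eq_and]
  rfl

theorem IsMUFamily.map (h : IsMUFamily g w) (e : V ↪ W) :
    IsMUFamily (fun i => (g i).map (e.prodMap (.refl Bool)))
      (fun i => extend e (w i) fun _ => false) where
  exists_not_clauseSat a := by
    simpa only [clauseSat_map_prodMap] using h.exists_not_clauseSat (a ∘ e)
  clauseSat_iff i j := by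
    rw [clauseSat_map_prodMap, ← h.clauseSat_iff i j, extend_comp e.injective]

theorem IsMUFamily.exists_minimalUnsat_fin [Fintype ι] [Fintype V] [DecidableEq V] {k n : ℕ}
    (h : IsMUFamily g w) (hk : IsKSat k (univ.image g)) (hV : Fintype.card V ≤ n) :
    ∃ F : Finset (Finset (Fin n × Bool)),
      IsKSat k F ∧ MinimalUnsat F ∧ F.card = Fintype.card ι := by
  obtain ⟨e⟩ := Function.Embedding.nonempty_of_card_le (hV.trans (Fintype.card_fin n).ge)
  have he := h.map e
  refine ⟨_, ?_, he.minimalUnsat, card_image_of_injective _ he.injective⟩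
  rw [isKSat_image_univ_iff] at hk ⊢
  intro i
  have hfst :
      ((g i).map (e.prodMap (.refl Bool))).image Prod.fst = ((g i).image Prod.fst).map e := by
    simp only [map_eq_image, image_image]
    rfl
  rw [card_map, hfst, card_map]
  exact hk i

end Rename

section FullClauses

variable {V : Type} [Fintype V] [DecidableEq V]

def fullClause (f : V → Bool) : Finset (V × Bool) :=
  univ.image fun v => (v, f v)

theorem clauseSat_fullClause (a f : V → Bool) :
    ClauseSat a (fullClause f) ↔ ∃ v, a v = f v := by
  simp [ClauseSat, fullClause]

theorem isMUFamily_fullClause : IsMUFamily (fullClause (V := V)) fun f v => !f v where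
  exists_not_clauseSat a := ⟨fun v => !a v, by simp [clauseSat_fullClause]⟩
  clauseSat_iff f f' := by
    simp only [clauseSat_fullClause, ne_eq, funext_iff, not_forall, Bool.not_eq_eq_eq_not]
    exact exists_congr fun v => by cases f v <;> cases f' v <;> simp

theorem isKSat_fullClause : IsKSat (Fintype.card V) (univ.image (fullClause (V := V))) := by
  rw [isKSat_image_univ_iff]
  intro f
  have hfst : (fullClause f).image Prod.fst = univ := by ext; simp [fullClause]
  rw [hfst, fullClause, card_image_of_injective _ fun v v' h => congrArg Prod.fst h]
  exact ⟨rfl, rfl⟩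

end FullClauses

section Staircase

variable {n : ℕ}

/-- For `k : Fin n` the clauses `(b, k.succ)` say `z k.castSucc = z k.succ`; the clauses `(b, 0)`
say `z 0 ≠ z (Fin.last n)`. -/
def staircaseClause (n : ℕ) : Bool × Fin (n + 1) → Finset (Fin (n + 1) × Bool)
  | (b, s) => Fin.cases {(0, !b), (Fin.last n, !b)} (fun k => {(k.castSucc, b), (k.succ, !b)}) s

def staircase : Bool × Fin (n + 1) → Fin (n + 1) → Bool
  | (b, s), c => if s ≤ c then b else !b

theorem clauseSat_staircaseClause_zero (a : Fin (n + 1) → Bool) (b : Bool) :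
    ClauseSat a (staircaseClause n (b, 0)) ↔ a 0 = !b ∨ a (Fin.last n) = !b := by
  simp [ClauseSat, staircaseClause]

theorem clauseSat_staircaseClause_succ (a : Fin (n + 1) → Bool) (b : Bool) (k : Fin n) :
    ClauseSat a (staircaseClause n (b, k.succ)) ↔ a k.castSucc = b ∨ a k.succ = !b := by
  simp [ClauseSat, staircaseClause]

theorem isMUFamily_staircaseClause : IsMUFamily (staircaseClause n) staircase where
  exists_not_clauseSat a := by
    by_contra! h
    have hchain (k : Fin n) : a k.succ = a k.castSucc := by
      have := (clauseSat_staircaseClause_succ a _ k).1 (h (a k.succ, k.succ))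
      cases hk : a k.succ <;> simp_all
    have hconst : a (Fin.last n) = a 0 :=
      Fin.induction (motive := fun i => a i = a 0) rfl (fun k ih => (hchain k).trans ih) _
    have := (clauseSat_staircaseClause_zero a (a 0)).1 (h (a 0, 0))
    cases h0 : a 0 <;> simp_all
  clauseSat_iff := by
    rintro ⟨b, s⟩ ⟨b', s'⟩
    cases s using Fin.cases <;> cases s' using Fin.cases <;>
      simp [clauseSat_staircaseClause_zero, clauseSat_staircaseClause_succ, staircase,
        Fin.le_last, Fin.succ_ne_zero] <;>
      cases b <;> cases b' <;> grind

theorem isKSat_staircaseClause (hn : 0 < n) : IsKSat 2 (univ.image (staircaseClause n)) := by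
  rw [isKSat_image_univ_iff]
  rintro ⟨b, s⟩
  cases s using Fin.cases with
  | zero =>
    have h0 : (0 : Fin (n + 1)) ≠ Fin.last n := by simp [Fin.ext_iff]; omega
    simp [staircaseClause, h0]
  | succ k => simp [staircaseClause, k.castSucc_lt_succ.ne]

end Staircase

section Product

variable {L ι V : Type} [DecidableEq L] [DecidableEq ι] [DecidableEq V]

def productClause [Fintype L] (g : ι → Finset (V × Bool)) :
    (L → ι) ⊕ (L × ι) → Finset ((L × (ι ⊕ V)) × Bool)
  | .inl f => univ.image fun l => ((l, .inl (f l)), false)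
  | .inr (l, i) => insert ((l, .inl i), true) ((g i).image fun p => ((l, .inr p.1), p.2))

def productWitness (w : ι → V → Bool) : (L → ι) ⊕ (L × ι) → L × (ι ⊕ V) → Bool
  | .inl f, (l, .inl i) => decide (i = f l)
  | .inl f, (l, .inr x) => w (f l) x
  | .inr (l, i), (l', .inl j) => decide (l' ≠ l ∧ j = i)
  | .inr (_, i), (_, .inr x) => w i x

variable [Fintype L] {g : ι → Finset (V × Bool)} {w : ι → V → Bool}

theorem clauseSat_productClause_inl (a : L × (ι ⊕ V) → Bool) (f : L → ι) :
    ClauseSat a (productClause g (.inl f)) ↔ ∃ l, a (l, .inl (f l)) = false := by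
  simp [ClauseSat, productClause]

theorem clauseSat_productClause_inr (a : L × (ι ⊕ V) → Bool) (l : L) (i : ι) :
    ClauseSat a (productClause g (.inr (l, i))) ↔
      a (l, .inl i) = true ∨ ClauseSat (fun x => a (l, .inr x)) (g i) := by
  simp only [ClauseSat, productClause, exists_mem_insert, exists_mem_image]

theorem IsMUFamily.product (h : IsMUFamily g w) :
    IsMUFamily (productClause (L := L) g) (productWitness w) where
  exists_not_clauseSat a := by
    by_cases hsel : ∀ l, ∃ i, a (l, .inl i) = true
    · choose f hf using hsel
      exact ⟨.inl f, by simp [clauseSat_productClause_inl, hf]⟩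
    · push Not at hsel
      obtain ⟨l, hl⟩ := hsel
      obtain ⟨i, hi⟩ := h.exists_not_clauseSat fun x => a (l, .inr x)
      exact ⟨.inr (l, i), by simp [clauseSat_productClause_inr, hl, hi]⟩
  clauseSat_iff := by
    rintro (f | ⟨l, i⟩) (f' | ⟨l', j⟩)
    · simp [clauseSat_productClause_inl, productWitness, funext_iff]
    · simp [clauseSat_productClause_inr, productWitness, h.clauseSat_iff]
      exact em _
    · simp [clauseSat_productClause_inl, productWitness]
      exact ⟨l, by simp⟩
    · simp only [clauseSat_productClause_inr, productWitness, h.clauseSat_iff]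
      simp only [decide_eq_true_eq, ne_eq, Sum.inr.injEq, Prod.mk.injEq]
      tauto

theorem isKSat_productClause [Fintype ι] {k : ℕ} (hg : IsKSat k (univ.image g))
    (hL : Fintype.card L = k + 1) :
    IsKSat (k + 1) (univ.image (productClause (L := L) g)) := by
  rw [isKSat_image_univ_iff] at hg ⊢
  rintro (f | ⟨l, i⟩)
  · rw [← hL, productClause, image_image,
      card_image_of_injective _ fun l l' h => congrArg (·.1.1) h,
      card_image_of_injective _ fun l l' h => congrArg (·.1) h]
    exact ⟨rfl, rfl⟩
  · simp only [productClause]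
    rw [card_insert_of_notMem (by simp), image_insert, card_insert_of_notMem (by simp), image_image]
    have hfst : (g i).image (Prod.fst ∘ fun p => ((l, .inr p.1), p.2)) =
        ((g i).image Prod.fst).image fun x => ((l, .inr x) : L × (ι ⊕ V)) := by
      rw [image_image]; rfl
    rw [hfst, card_image_of_injective _ fun p q h => ?_, card_image_of_injective _ fun x y h => ?_]
    · exact ⟨congrArg (· + 1) (hg i).1, congrArg (· + 1) (hg i).2⟩
    · simpa using h
    · simpa [Prod.ext_iff] using h

end Product

theorem exists_minimalUnsat_threeSat (m : ℕ) (hm : 1 ≤ m) :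
    ∃ F : Finset (Finset (Fin (9 * m) × Bool)),
      IsKSat 3 F ∧ MinimalUnsat F ∧ 8 * m ^ 3 ≤ F.card := by
  obtain ⟨n, rfl⟩ : ∃ n, m = n + 1 := ⟨m - 1, by omega⟩
  rcases Nat.eq_zero_or_pos n with rfl | hn
  · obtain ⟨F, hk, hmu, hcard⟩ := (isMUFamily_fullClause (V := Fin 3)).exists_minimalUnsat_fin
      (n := 9 * 1) isKSat_fullClause (by simp)
    exact ⟨F, by simpa using hk, hmu, by simp [hcard]⟩
  · obtain ⟨F, hk, hmu, hcard⟩ := (isMUFamily_staircaseClause (n := n)).product (L := Fin 3)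
      |>.exists_minimalUnsat_fin (n := 9 * (n + 1))
        (isKSat_productClause (isKSat_staircaseClause hn) (by simp)) (by simp; omega)
    refine ⟨F, hk, hmu, ?_⟩
    simp [hcard, mul_pow]
end
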